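/- arXiv:2201.00342 — 4 statements merged into one kernel-verified Lean document; each statement's English description precedes it below -/
import Mathlib

section
/- If η is a complex number with |η| ≤ 2^{-d} for some natural number d ≥ 1, then (1+η)^{-1} can be written as (1+ξ₁)(1+ξ₂) with |ξ₁|, |ξ₂| ≤ 2^{-d}. Equivalently, there exists ξ with |ξ| ≤ 2^{-d} and (1+ξ)² = (1+η)^{-1}. -/
/-!
Take `ξ = exp (-log (1 + η) / 2) - 1` and `t = ‖η‖`. Comparing Taylor series with their majorants,
`‖log (1 + η)‖ ≤ -log (1 - t)` and `‖exp z - 1‖ ≤ exp ‖z‖ - 1`, so `‖ξ‖ ≤ (1 - t)^(-1/2) - 1`,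
which is at most `t` as soon as `(1 - t) (1 + t)² ≥ 1`, i.e. `t + t² ≤ 1`.
-/

namespace Complex

theorem norm_log_one_add_le_neg_log_one_sub {z : ℂ} (hz : ‖z‖ < 1) :
    ‖log (1 + z)‖ ≤ -Real.log (1 - ‖z‖) := by
  have hlog := (hasSum_nat_add_iff' 1).mpr (hasSum_taylorSeries_log hz)
  have hmajorant := Real.hasSum_pow_div_log_of_abs_lt_one (x := ‖z‖) (by simpa using hz)
  simpa using hlog.norm_le_of_bounded hmajorant fun n ↦ by
    simp only [norm_div, norm_mul, norm_pow, norm_neg, norm_one, one_pow, one_mul]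
    norm_cast

theorem norm_exp_sub_one_le_exp_norm_sub_one (z : ℂ) : ‖exp z - 1‖ ≤ Real.exp ‖z‖ - 1 := by
  simpa using norm_exp_sub_sum_le_exp_norm_sub_sum z 1

end Complex

theorem Real.neg_log_one_sub_le_two_mul_log_one_add {t : ℝ} (h0 : 0 ≤ t) (h : t + t ^ 2 ≤ 1) :
    -Real.log (1 - t) ≤ 2 * Real.log (1 + t) := by
  have hprod : 1 ≤ (1 - t) * (1 + t) ^ 2 := by nlinarith
  have := Real.log_nonneg hprod
  rw [Real.log_mul (by nlinarith) (by positivity), Real.log_pow] at this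
  push_cast at this
  linarith

open Complex in
theorem exists_norm_le_and_sq_one_add_eq_inv {η : ℂ} (h : ‖η‖ + ‖η‖ ^ 2 ≤ 1) :
    ∃ ξ : ℂ, ‖ξ‖ ≤ ‖η‖ ∧ (1 + ξ) ^ 2 = (1 + η)⁻¹ := by
  have hη : ‖η‖ < 1 := by nlinarith [norm_nonneg η]
  have hne : 1 + η ≠ 0 := by
    intro h0
    simp [eq_neg_of_add_eq_zero_right h0] at hη
  refine ⟨exp (-log (1 + η) / 2) - 1, ?_, ?_⟩
  · have hexp : -Real.log (1 - ‖η‖) / 2 ≤ Real.log (1 + ‖η‖) := by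
      linarith [Real.neg_log_one_sub_le_two_mul_log_one_add (norm_nonneg η) h]
    calc ‖exp (-log (1 + η) / 2) - 1‖
        ≤ Real.exp (‖log (1 + η)‖ / 2) - 1 := by
          simpa using norm_exp_sub_one_le_exp_norm_sub_one (-log (1 + η) / 2)
      _ ≤ Real.exp (Real.log (1 + ‖η‖)) - 1 := by
          gcongr
          linarith [norm_log_one_add_le_neg_log_one_sub hη]
      _ = ‖η‖ := by rw [Real.exp_log (by positivity)]; ring
  · rw [add_sub_cancel, ← exp_nat_mul]
    push_cast
    rw [mul_div_cancel₀ _ two_ne_zero, exp_neg, exp_log hne]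

/-- A factor `(1+η)⁻¹` with `‖η‖ ≤ 2^(-d)`, `d ≥ 1`, can be written as
`(1+ξ)²` with `‖ξ‖ ≤ 2^(-d)`. -/
theorem stmt2 (d : ℕ) (hd : 1 ≤ d) (η : ℂ) (hη : ‖η‖ ≤ (2:ℝ) ^ (-(d:ℤ))) :
    ∃ ξ : ℂ, ‖ξ‖ ≤ (2:ℝ) ^ (-(d:ℤ)) ∧ (1 + ξ) ^ 2 = (1 + η)⁻¹ := by
  have hhalf : (2:ℝ) ^ (-(d:ℤ)) ≤ 1 / 2 := by
    calc (2:ℝ) ^ (-(d:ℤ)) ≤ (2:ℝ) ^ (-1:ℤ) := zpow_le_zpow_right₀ one_le_two (by omega)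
      _ = 1 / 2 := by norm_num
  obtain ⟨ξ, hξ, hsq⟩ :=
    exists_norm_le_and_sq_one_add_eq_inv (η := η) (by nlinarith [norm_nonneg η])
  exact ⟨ξ, hξ.trans hη, hsq⟩
end

section
/- Let a = x+iy and b = u+iv be complex numbers and suppose the complex product is computed as a⊗b = {x(u+iv)(1+δ)}⊕{y(-v+iu)(1+ξ)} where |δ|, |ξ| ≤ 2^{-d} (complex) and the outer addition introduces a factor (1+η₀) with |η₀| ≤ 2^{-d}. Then a⊗b = ab(1+η₁)(1+η₂)(1+η₃) for complex η_j with |η_j| ≤ 2^{-d}; in particular |a⊗b − ab| ≤ |ab|((1+2^{-d})³ − 1). -/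
/-!
Write `a = x + yI` and `b = u + vI`, so that `ab = x·b + y·(Ib)` and the computed value is
`(ab + x·b·δ + y·(Ib)·ξ)(1 + η₀)`. Since `|x| + |y| ≤ √2 ‖a‖`, the perturbation is `ab·λ` with
`‖λ‖ ≤ √2·2^(-d)`. For `d ≥ 1` this is at most `ε(2 - ε)` with `ε = 2^(-d)`, and every `1 + λ`
with `‖λ‖ ≤ ε(2 - ε)` is a square `(1 + μ)²` with `‖μ‖ ≤ ε`. Hence the computed value is
`ab(1 + μ)(1 + μ)(1 + η₀)`.
-/

open Complex

namespace Complex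

lemma abs_add_abs_le_sqrt_two_mul_norm (x y : ℝ) : |x| + |y| ≤ √2 * ‖(x : ℂ) + y * I‖ := by
  rw [norm_add_mul_I, ← Real.sqrt_mul zero_le_two]
  apply Real.le_sqrt_of_sq_le
  nlinarith [sq_abs x, sq_abs y, sq_nonneg (|x| - |y|)]

lemma norm_mul_add_I_mul_le {x y ε : ℝ} {w δ ξ : ℂ} (hδ : ‖δ‖ ≤ ε) (hξ : ‖ξ‖ ≤ ε) :
    ‖x * w * δ + y * (I * w) * ξ‖ ≤ √2 * ε * ‖(x + y * I) * w‖ :=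
  calc ‖x * w * δ + y * (I * w) * ξ‖
      ≤ |x| * ‖w‖ * ‖δ‖ + |y| * ‖w‖ * ‖ξ‖ := by
        refine (norm_add_le _ _).trans_eq ?_
        simp only [norm_mul, norm_real, Real.norm_eq_abs, norm_I, one_mul]
    _ ≤ |x| * ‖w‖ * ε + |y| * ‖w‖ * ε := by gcongr
    _ = (|x| + |y|) * ε * ‖w‖ := by ring
    _ ≤ √2 * ‖(x : ℂ) + y * I‖ * ε * ‖w‖ := by
        gcongr
        · exact (norm_nonneg δ).trans hδ
        · exact abs_add_abs_le_sqrt_two_mul_norm x y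
    _ = √2 * ε * ‖(x + y * I) * w‖ := by rw [norm_mul]; ring

/-- Choosing the square root `s` of `1 + z` with `‖s - 1‖ ≤ ‖s + 1‖`, the product of the two norms
is `‖z‖` while their sum is at least `2`, which forces `‖s - 1‖ ≤ ε`. -/
lemma exists_sq_eq_one_add_of_norm_le {z : ℂ} {ε : ℝ} (hz : ‖z‖ ≤ ε * (2 - ε)) :
    ∃ μ : ℂ, ‖μ‖ ≤ ε ∧ (1 + μ) ^ 2 = 1 + z := by
  obtain ⟨s, hs⟩ := IsAlgClosed.exists_pow_nat_eq (1 + z) two_pos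
  wlog hle : ‖s - 1‖ ≤ ‖s + 1‖ generalizing s
  · refine this (-s) (by rw [neg_pow_two, hs]) ?_
    rw [show -s - 1 = -(s + 1) by ring, show -s + 1 = -(s - 1) by ring, norm_neg, norm_neg]
    linarith
  refine ⟨s - 1, ?_, by rw [← hs]; ring⟩
  have hsum : 2 ≤ ‖s - 1‖ + ‖s + 1‖ := by
    simpa [show (s + 1) - (s - 1) = 2 by ring, add_comm] using norm_sub_le (s + 1) (s - 1)
  have hprod : ‖s - 1‖ * ‖s + 1‖ = ‖z‖ := by
    rw [← norm_mul, show (s - 1) * (s + 1) = z by linear_combination hs]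
  by_contra! hlt
  have hq : ‖s - 1‖ * (2 - ‖s - 1‖) ≤ ‖s - 1‖ * ‖s + 1‖ := by gcongr; linarith
  rcases le_or_gt ‖s - 1‖ 1 with hp | hp
  · nlinarith [mul_pos (sub_pos.2 hlt) (show 0 < 2 - ‖s - 1‖ - ε by linarith)]
  · nlinarith [sq_nonneg (1 - ε)]

end Complex

lemma exists_eq_mul_norm_le {𝕜 : Type*} [NormedDivisionRing 𝕜] {c n : 𝕜} {K : ℝ} (hK : 0 ≤ K)
    (h : ‖n‖ ≤ K * ‖c‖) : ∃ z : 𝕜, ‖z‖ ≤ K ∧ n = c * z := by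
  rcases eq_or_ne c 0 with rfl | hc
  · exact ⟨0, by simpa using hK, by simpa using h⟩
  refine ⟨c⁻¹ * n, ?_, by rw [mul_inv_cancel_left₀ hc]⟩
  rw [norm_mul, norm_inv, inv_mul_le_iff₀ (norm_pos_iff.mpr hc), mul_comm]
  exact h

lemma norm_one_add_mul_one_add_sub_one_le {R : Type*} [SeminormedRing R] [NormOneClass R]
    (a b : R) : ‖(1 + a) * (1 + b) - 1‖ ≤ (1 + ‖a‖) * (1 + ‖b‖) - 1 := by
  rw [show (1 + a) * (1 + b) - 1 = a + b + a * b by noncomm_ring]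
  have := norm_mul_le a b
  have := norm_add₃_le (a := a) (b := b) (c := a * b)
  linarith

lemma norm_mul_one_add_three_sub_le {R : Type*} [SeminormedRing R] [NormOneClass R]
    {c η₁ η₂ η₃ : R} {ε : ℝ} (h₁ : ‖η₁‖ ≤ ε) (h₂ : ‖η₂‖ ≤ ε) (h₃ : ‖η₃‖ ≤ ε) :
    ‖c * (1 + η₁) * (1 + η₂) * (1 + η₃) - c‖ ≤ ‖c‖ * ((1 + ε) ^ 3 - 1) := by
  have hε : 0 ≤ ε := (norm_nonneg _).trans h₁
  set A := (1 + η₁) * (1 + η₂) - 1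
  have hA : ‖A‖ ≤ (1 + ε) ^ 2 - 1 := by
    grw [norm_one_add_mul_one_add_sub_one_le, h₁, h₂]
    exact le_of_eq (by ring)
  calc ‖c * (1 + η₁) * (1 + η₂) * (1 + η₃) - c‖ = ‖c * ((1 + A) * (1 + η₃) - 1)‖ := by
        congr 1; simp only [A]; noncomm_ring
    _ ≤ ‖c‖ * ((1 + ‖A‖) * (1 + ‖η₃‖) - 1) := by
        grw [norm_mul_le, norm_one_add_mul_one_add_sub_one_le]
    _ ≤ ‖c‖ * ((1 + ε) ^ 3 - 1) := by
        grw [hA, h₃]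
        · exact le_of_eq (by ring)
        · nlinarith

/-- Floating-point complex multiplication: if
`a⊗b = {x(u+iv)(1+δ) + y(-v+iu)(1+ξ)}(1+η₀)` with `‖δ‖,‖ξ‖,‖η₀‖ ≤ 2^(-d)`
(`d ≥ 1`), then `a⊗b = ab(1+η₁)(1+η₂)(1+η₃)` with `‖ηⱼ‖ ≤ 2^(-d)`, and in
particular `‖a⊗b − ab‖ ≤ ‖ab‖((1+2^(-d))³ − 1)`. -/
theorem stmt7 (d : ℕ) (hd : 1 ≤ d) (x y u v : ℝ) (δ ξ η₀ : ℂ)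
    (hδ : ‖δ‖ ≤ (2:ℝ) ^ (-(d:ℤ))) (hξ : ‖ξ‖ ≤ (2:ℝ) ^ (-(d:ℤ)))
    (hη₀ : ‖η₀‖ ≤ (2:ℝ) ^ (-(d:ℤ)))
    (a b P : ℂ) (ha : a = (x : ℂ) + (y : ℂ) * Complex.I)
    (hb : b = (u : ℂ) + (v : ℂ) * Complex.I)
    (hP : P = ((x : ℂ) * ((u : ℂ) + (v : ℂ) * Complex.I) * (1 + δ)
        + (y : ℂ) * (-(v : ℂ) + (u : ℂ) * Complex.I) * (1 + ξ)) * (1 + η₀)) :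
    (∃ η₁ η₂ η₃ : ℂ, ‖η₁‖ ≤ (2:ℝ) ^ (-(d:ℤ)) ∧ ‖η₂‖ ≤ (2:ℝ) ^ (-(d:ℤ)) ∧
        ‖η₃‖ ≤ (2:ℝ) ^ (-(d:ℤ)) ∧ P = a * b * (1 + η₁) * (1 + η₂) * (1 + η₃)) ∧
    ‖P - a * b‖ ≤ ‖a * b‖ * ((1 + (2:ℝ) ^ (-(d:ℤ))) ^ 3 - 1) := by
  set ε : ℝ := (2:ℝ) ^ (-(d:ℤ))
  have hε : 0 ≤ ε := by positivity
  have hε_half : ε ≤ 1 / 2 :=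
    calc ε ≤ (2:ℝ) ^ (-1 : ℤ) := zpow_le_zpow_right₀ one_le_two (by omega)
      _ = 1 / 2 := by norm_num
  have hsqrt_two : √2 * ε ≤ ε * (2 - ε) := by
    nlinarith [Real.sqrt_le_sqrt (show (2:ℝ) ≤ (3 / 2) ^ 2 by norm_num),
      Real.sqrt_sq (show (0:ℝ) ≤ 3 / 2 by norm_num)]
  have hIb : -(v : ℂ) + u * I = I * b := by rw [hb]; linear_combination (-v : ℂ) * I_sq
  have hP' : P = (a * b + (x * b * δ + y * (I * b) * ξ)) * (1 + η₀) := by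
    rw [hP, hIb, ← hb, ha]; ring
  obtain ⟨z, hz, hz_eq⟩ := exists_eq_mul_norm_le (by positivity) (ha ▸ norm_mul_add_I_mul_le hδ hξ)
  obtain ⟨μ, hμ, hμ_sq⟩ := exists_sq_eq_one_add_of_norm_le (hz.trans hsqrt_two)
  have hfactor : ∃ η₁ η₂ η₃ : ℂ, ‖η₁‖ ≤ ε ∧ ‖η₂‖ ≤ ε ∧ ‖η₃‖ ≤ ε ∧
      P = a * b * (1 + η₁) * (1 + η₂) * (1 + η₃) :=
    ⟨μ, μ, η₀, hμ, hμ, hη₀, by rw [hP', hz_eq]; linear_combination a * b * (1 + η₀) * hμ_sq.symm⟩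
  refine ⟨hfactor, ?_⟩
  obtain ⟨η₁, η₂, η₃, h₁, h₂, h₃, hP_eq⟩ := hfactor
  exact hP_eq ▸ norm_mul_one_add_three_sub_le h₁ h₂ h₃
end

section
/- If λ is a complex number with |λ| ≤ 2^{-1/2}, and μ is defined by the binomial series μ = Σ_{n≥1} C(1/2,n) λⁿ (so that (1+μ)² = 1+λ), then |μ| ≤ |λ|·Σ_{n≥1} |C(1/2,n)| 2^{-(n-1)/2}, and if moreover |λ| ≤ √2·2^{-d} then |μ| ≤ 2^{-d}. -/
/-- The generalized binomial coefficient `C(1/2, n)`. -/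
noncomputable def halfChoose (n : ℕ) : ℝ :=
  (∏ i ∈ Finset.range n, ((1:ℝ)/2 - (i : ℝ))) / (n.factorial : ℝ)

/-!
Since `|λ| ≤ 2^(-1/2)`, comparing termwise gives
`|μ| ≤ Σ |C(1/2,n+1)| |λ|^(n+1) ≤ |λ| · Σ |C(1/2,n+1)| 2^(-n/2)`.
The coefficients `|C(1/2,n)|` decrease, so the series is at most
`1/2 + q/8 + (1/16) q²/(1-q)` with `q = 1/√2`, and `√2` times this is `≈ 0.983 < 1`;
hence `|λ| ≤ √2 · 2^(-d)` forces `|μ| ≤ 2^(-d)`.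
-/

open Finset

theorem norm_tsum_mul_pow_succ_le {𝕜 : Type*} [NormedDivisionRing 𝕜] {a : ℕ → 𝕜} {x : 𝕜}
    {r : ℝ} (hx : ‖x‖ ≤ r) (ha : Summable fun n => ‖a n‖ * r ^ n) :
    ‖∑' n, a n * x ^ (n + 1)‖ ≤ ‖x‖ * ∑' n, ‖a n‖ * r ^ n := by
  refine tsum_of_norm_bounded (ha.hasSum.mul_left ‖x‖) fun n => ?_
  calc ‖a n * x ^ (n + 1)‖ = ‖x‖ * (‖a n‖ * ‖x‖ ^ n) := by rw [norm_mul, norm_pow]; ring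
    _ ≤ ‖x‖ * (‖a n‖ * r ^ n) := by gcongr

section Antitone

variable {b : ℕ → ℝ} {q : ℝ}

theorem summable_mul_pow_of_antitone (hb : Antitone b) (hb0 : ∀ n, 0 ≤ b n)
    (hq0 : 0 ≤ q) (hq1 : q < 1) : Summable fun n => b n * q ^ n :=
  ((summable_geometric_of_lt_one hq0 hq1).mul_left (b 0)).of_nonneg_of_le
    (fun n => mul_nonneg (hb0 n) (pow_nonneg hq0 n)) fun n => by gcongr; exact hb (Nat.zero_le n)

theorem tsum_mul_pow_le_of_antitone (hb : Antitone b) (hb0 : ∀ n, 0 ≤ b n)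
    (hq0 : 0 ≤ q) (hq1 : q < 1) (k : ℕ) :
    ∑' n, b n * q ^ n ≤ ∑ i ∈ range k, b i * q ^ i + b k * q ^ k / (1 - q) := by
  have hsum := summable_mul_pow_of_antitone hb hb0 hq0 hq1
  have hgeom := (summable_geometric_of_lt_one hq0 hq1).mul_left (b k * q ^ k)
  have htail : ∑' n, b (n + k) * q ^ (n + k) ≤ b k * q ^ k / (1 - q) := calc
    ∑' n, b (n + k) * q ^ (n + k) ≤ ∑' n, b k * q ^ k * q ^ n := by
      refine ((summable_nat_add_iff k).mpr hsum).tsum_le_tsum (fun n => ?_) hgeom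
      rw [pow_add, mul_comm (q ^ n), ← mul_assoc]
      gcongr
      exact hb (Nat.le_add_left k n)
    _ = b k * q ^ k / (1 - q) := by
      rw [tsum_mul_left, tsum_geometric_of_lt_one hq0 hq1, div_eq_mul_inv]
  rw [← hsum.sum_add_tsum_nat_add k]
  linarith

end Antitone

theorem halfChoose_succ (n : ℕ) :
    halfChoose (n + 1) = halfChoose n * ((1 / 2 - n) / (n + 1)) := by
  rw [halfChoose, halfChoose, prod_range_succ, div_mul_div_comm, Nat.factorial_succ]
  push_cast
  ring

theorem abs_halfChoose_antitone : Antitone fun n => |halfChoose n| := by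
  refine antitone_nat_of_succ_le fun n => ?_
  have hn : (0 : ℝ) ≤ n := n.cast_nonneg
  have hratio : |(1 / 2 - (n : ℝ)) / (n + 1)| ≤ 1 := by
    rw [abs_div, abs_of_pos (by positivity : (0 : ℝ) < n + 1), div_le_one (by positivity),
      abs_le]
    constructor <;> linarith
  rw [halfChoose_succ, abs_mul]
  exact mul_le_of_le_one_right (abs_nonneg _) hratio

theorem abs_halfChoose_succ_antitone : Antitone fun n => |halfChoose (n + 1)| :=
  abs_halfChoose_antitone.comp_monotone fun _ _ h => Nat.succ_le_succ h

theorem two_rpow_neg_div_two (n : ℕ) : (2 : ℝ) ^ (-(n : ℝ) / 2) = (√2)⁻¹ ^ n := by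
  rw [Real.sqrt_eq_rpow, ← Real.rpow_neg zero_le_two, ← Real.rpow_natCast,
    ← Real.rpow_mul zero_le_two]
  ring_nf

theorem sqrt_two_mul_tsum_abs_halfChoose_le :
    √2 * ∑' n, |halfChoose (n + 1)| * (√2)⁻¹ ^ n ≤ 1 := by
  have hs1 : 0 < √2 - 1 := by
    linarith [Real.le_sqrt_of_sq_le (show (1.41 : ℝ) ^ 2 ≤ 2 by norm_num)]
  have hbound := tsum_mul_pow_le_of_antitone abs_halfChoose_succ_antitone (fun n => abs_nonneg _)
    (inv_nonneg.mpr (Real.sqrt_nonneg 2)) (inv_lt_one_of_one_lt₀ (by linarith)) 2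
  have hc1 : |halfChoose 1| = 1 / 2 := by norm_num [halfChoose]
  have hc2 : |halfChoose 2| = 1 / 8 := by norm_num [halfChoose, prod_range_succ]
  have hc3 : |halfChoose 3| = 1 / 16 := by norm_num [halfChoose, prod_range_succ, Nat.factorial]
  simp only [sum_range_succ, sum_range_zero, hc1, hc2, hc3] at hbound
  refine (mul_le_mul_of_nonneg_left hbound (Real.sqrt_nonneg 2)).trans ?_
  have hs2 : √2 ^ 2 = 2 := Real.sq_sqrt zero_le_two
  generalize √2 = s at hs1 hs2 ⊢
  have hs0 : 0 < s := by linarith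
  rw [show 1 - s⁻¹ = (s - 1) / s by field_simp]
  field_simp
  nlinarith

/-- If `‖λ‖ ≤ 2^(-1/2)` and `μ = Σ_{n≥1} C(1/2,n) λⁿ` (the binomial series
for `(1+λ)^(1/2) − 1`), then `‖μ‖ ≤ ‖λ‖·Σ_{n≥1}|C(1/2,n)|2^(-(n-1)/2)`, and
whenever `‖λ‖ ≤ √2·2^(-d)` we get `‖μ‖ ≤ 2^(-d)`. -/
theorem stmt8 (lam μ : ℂ) (hlam : ‖lam‖ ≤ (2:ℝ) ^ (-(1:ℝ)/2))
    (hμ : μ = ∑' n : ℕ, ((halfChoose (n+1) : ℝ) : ℂ) * lam ^ (n+1)) :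
    ‖μ‖ ≤ ‖lam‖ * ∑' n : ℕ, |halfChoose (n+1)| * (2:ℝ) ^ (-(n:ℝ)/2) ∧
    ∀ d : ℕ, ‖lam‖ ≤ Real.sqrt 2 * (2:ℝ) ^ (-(d:ℤ)) → ‖μ‖ ≤ (2:ℝ) ^ (-(d:ℤ)) := by
  have hq1 : (√2)⁻¹ < 1 := inv_lt_one_of_one_lt₀ (by simp [Real.lt_sqrt])
  have hsum : Summable fun n => |halfChoose (n + 1)| * (√2)⁻¹ ^ n :=
    summable_mul_pow_of_antitone abs_halfChoose_succ_antitone (fun n => abs_nonneg _)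
      (by positivity) hq1
  have hμ_le : ‖μ‖ ≤ ‖lam‖ * ∑' n, |halfChoose (n + 1)| * (√2)⁻¹ ^ n := by
    simpa only [hμ, Complex.norm_real, Real.norm_eq_abs] using
      norm_tsum_mul_pow_succ_le (a := fun n => (halfChoose (n + 1) : ℂ))
        (hlam.trans_eq (by simpa using two_rpow_neg_div_two 1))
        (by simpa only [Complex.norm_real, Real.norm_eq_abs] using hsum)
  simp only [two_rpow_neg_div_two]
  refine ⟨hμ_le, fun d hd => ?_⟩
  calc ‖μ‖ ≤ √2 * 2 ^ (-(d : ℤ)) * ∑' n, |halfChoose (n + 1)| * (√2)⁻¹ ^ n := by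
        refine hμ_le.trans ?_; gcongr
    _ = 2 ^ (-(d : ℤ)) * (√2 * ∑' n, |halfChoose (n + 1)| * (√2)⁻¹ ^ n) := by ring
    _ ≤ 2 ^ (-(d : ℤ)) := mul_le_of_le_one_right (by positivity) sqrt_two_mul_tsum_abs_halfChoose_le
end

section
/- For every nonnegative integer n, Σ_{j=0}^{n} (n-j+4) · (4/π)·2^{2j} · (1/(2n-2j)!)·(π/2)^{2n-2j} < 2^{2n}·( (16/π)cosh(π/4) + (1/2)sinh(π/4) ) < 7.2·2^{2n}. -/
/-!
Reversing the summation index (`k = n - j`) turns the sum into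
`4ⁿ (4/π) Σ_{k ≤ n} (k + 4) (π/4)^{2k} / (2k)!`, a partial sum of a series with positive terms
whose value is `4 cosh x + (x/2) sinh x` at `x = π/4`, since `Σ k x^{2k}/(2k)! = (x/2) sinh x`.
The second inequality is numerical.
-/

open Real Finset Nat

lemma hasSum_nat_mul_pow_two_mul_div_factorial (x : ℝ) :
    HasSum (fun k : ℕ => k * x ^ (2 * k) / (2 * k)!) (x / 2 * sinh x) := by
  refine (hasSum_nat_add_iff' 1).mp ?_
  simp only [sum_range_one, CharP.cast_eq_zero, zero_mul, zero_div, sub_zero]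
  refine ((hasSum_sinh x).mul_left (x / 2)).congr_fun fun k => ?_
  have hfac : ((2 * (k + 1))! : ℝ) = (2 * k + 2) * (2 * k + 1)! := by
    rw [show 2 * (k + 1) = 2 * k + 1 + 1 by ring, factorial_succ]
    push_cast; ring
  rw [hfac, show 2 * (k + 1) = 2 * k + 1 + 1 by ring, pow_succ]
  push_cast
  field_simp

lemma hasSum_add_mul_pow_two_mul_div_factorial (a x : ℝ) :
    HasSum (fun k : ℕ => (k + a) * x ^ (2 * k) / (2 * k)!) (x / 2 * sinh x + a * cosh x) :=
  ((hasSum_nat_mul_pow_two_mul_div_factorial x).add ((hasSum_cosh x).mul_left a)).congr_fun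
    fun k => by ring

lemma sum_range_lt_of_hasSum {f : ℕ → ℝ} {a : ℝ} (hf : ∀ k, 0 < f k) (h : HasSum f a) (n : ℕ) :
    ∑ k ∈ range n, f k < a :=
  calc ∑ k ∈ range n, f k < ∑ k ∈ range (n + 1), f k := by
        rw [sum_range_succ]; linarith [hf n]
    _ ≤ a := sum_le_hasSum _ (fun k _ => (hf k).le) h

lemma convolution_sum_eq_two_pow_mul_sum (m n : ℕ) (c y : ℝ) :
    ∑ j ∈ range (n + 1),
        ((n - j + m : ℕ) : ℝ) * c * 2 ^ (2 * j) * (1 / ((2 * n - 2 * j)! : ℝ)) * y ^ (2 * n - 2 * j)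
      = 2 ^ (2 * n) * c * ∑ k ∈ range (n + 1), (k + m) * (y / 2) ^ (2 * k) / (2 * k)! := by
  rw [← sum_range_reflect, mul_sum]
  refine sum_congr rfl fun k hk => ?_
  have hkn : k ≤ n := by simpa [Nat.lt_succ_iff] using hk
  rw [show n + 1 - 1 - k = n - k by omega, show n - (n - k) + m = k + m by omega,
    show 2 * n - 2 * (n - k) = 2 * k by omega, div_pow,
    show 2 * n = 2 * (n - k) + 2 * k by omega, pow_add]
  push_cast
  field_simp

lemma exp_pi_div_four_lt : exp (π / 4) < 2.194 := by
  calc exp (π / 4) ≤ exp 0.7854 := exp_le_exp.mpr (by linarith [pi_lt_d4])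
    _ ≤ ∑ m ∈ range 6, (0.7854 : ℝ) ^ m / m ! + 0.7854 ^ 6 * (6 + 1) / (6 ! * 6) :=
        exp_bound' (by norm_num) (by norm_num) (by norm_num)
    _ < 2.194 := by norm_num [sum_range_succ, factorial]

lemma lt_exp_pi_div_four : 2.1921 < exp (π / 4) := by
  calc (2.1921 : ℝ) < ∑ m ∈ range 7, (0.785 : ℝ) ^ m / m ! := by
        norm_num [sum_range_succ, factorial]
    _ ≤ exp 0.785 := sum_le_exp_of_nonneg (by norm_num) 7
    _ ≤ exp (π / 4) := exp_le_exp.mpr (by linarith [pi_gt_d2])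

/-- With `E = exp (π/4)` the left side is `(8/π + 1/4) E + (8/π - 1/4) E⁻¹`, so upper bounds on
`E`, `E⁻¹` and `1/π` suffice. -/
lemma cosh_sinh_pi_div_four_lt :
    16 / π * cosh (π / 4) + 1 / 2 * sinh (π / 4) < 7.2 := by
  have hE := exp_pi_div_four_lt
  have hF : exp (-(π / 4)) < 0.4562 := by
    rw [exp_neg, inv_lt_comm₀ (exp_pos _) (by norm_num)]
    linarith [lt_exp_pi_div_four]
  have hp : 1 / π < 0.31832 := by
    rw [div_lt_iff₀ pi_pos]; linarith [pi_gt_d4]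
  have hp' : 1 / 32 < 1 / π := by
    rw [div_lt_div_iff₀ (by norm_num) pi_pos]; linarith [pi_lt_d2]
  rw [cosh_eq, sinh_eq, div_eq_mul_one_div 16]
  nlinarith [exp_pos (π / 4), exp_pos (-(π / 4)),
    mul_lt_mul_of_pos_right hp (exp_pos (π / 4)),
    mul_lt_mul_of_pos_left hF (show 0 < 8 * (1 / π) - 1 / 4 by linarith)]

/-- Weighted convolution bound:
`Σ_{j=0}^n (n-j+4)(4/π)2^{2j}(π/2)^{2n-2j}/(2n-2j)!
  < 2^{2n}((16/π)cosh(π/4) + (1/2)sinh(π/4)) < 7.2·2^{2n}`. -/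
theorem stmt14 (n : ℕ) :
    ∑ j ∈ Finset.range (n + 1),
        ((n - j + 4 : ℕ) : ℝ) * (4 / Real.pi) * 2 ^ (2 * j)
          * (1 / ((2 * n - 2 * j).factorial : ℝ)) * (Real.pi / 2) ^ (2 * n - 2 * j)
      < 2 ^ (2 * n) * ((16 / Real.pi) * Real.cosh (Real.pi / 4)
          + (1/2) * Real.sinh (Real.pi / 4)) ∧
    2 ^ (2 * n) * ((16 / Real.pi) * Real.cosh (Real.pi / 4)
          + (1/2) * Real.sinh (Real.pi / 4))
      < 7.2 * 2 ^ (2 * n) := by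
  have h4n : (0 : ℝ) < 2 ^ (2 * n) := by positivity
  refine ⟨?_, by nlinarith [cosh_sinh_pi_div_four_lt]⟩
  have hseries := hasSum_add_mul_pow_two_mul_div_factorial 4 (π / 4)
  have hpartial := sum_range_lt_of_hasSum (fun k => by positivity) hseries (n + 1)
  rw [convolution_sum_eq_two_pow_mul_sum, show π / 2 / 2 = π / 4 by ring]
  calc 2 ^ (2 * n) * (4 / π) * ∑ k ∈ range (n + 1), ((k : ℝ) + 4) * (π / 4) ^ (2 * k) / (2 * k)!
      < 2 ^ (2 * n) * (4 / π) * (π / 4 / 2 * sinh (π / 4) + 4 * cosh (π / 4)) := by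
        gcongr
    _ = _ := by field_simp; ring
end
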